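/- Let f : H₊ⁿ → ℂ be a bounded holomorphic function on the product of right half-planes H₊ⁿ = {z ∈ ℂⁿ : Re z_j > 0 for all j}. If the zero set E = {α ∈ ℕ₊ⁿ : f(α) = 0} satisfies condition (I), then f ≡ 0 on H₊ⁿ. -/

import Mathlib

/-!
Dividing a bounded holomorphic function on the right half-plane by the Blaschke factor
`(z - a) / (z + a)` of one of its zeros `a > 0` does not increase its sup bound: after the Cayley
transform this is Schwarz's lemma on the unit disc. Iterating over a finite set `s` of positive
integer zeros gives `‖f z‖ ≤ C * ∏ k ∈ s, ‖(z - k) / (z + k)‖ ≤ C * exp (-c * ∑ k ∈ s, 1 / k)`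
with `c = 2 * re z / (1 + ‖z‖) ^ 2`, so a divergent sum of reciprocals of zeros forces `f = 0`.

In several variables, freeze all coordinates but one and argue by downward induction on the
number of leading coordinates taken from a point of `Ê`: condition (I) makes the zeros of each
one-variable slice a set with divergent sum of reciprocals.
-/

open scoped ENNReal

/-- The fiber of `E` consisting of multi-indices whose coordinates below `j`
agree with those of `a`. -/
def fiberSet {n : ℕ} (E : Set (Fin n → ℕ)) (j : Fin n) (a : Fin n → ℕ) :
    Set (Fin n → ℕ) :=
  {x ∈ E | ∀ i : Fin n, i < j → x i = a i}

/-- A set `F` of multi-indices is *thick* in the coordinate `j` if the positive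
integers occurring as `j`-th coordinates of elements of `F` have divergent
sum of reciprocals. -/
def ThickAt {n : ℕ} (F : Set (Fin n → ℕ)) (j : Fin n) : Prop :=
  ∑' k : {k : ℕ | 0 < k ∧ ∃ x ∈ F, x j = k}, (1 : ℝ≥0∞) / ((k : ℕ) : ℝ≥0∞) = ⊤

/-- Condition (I): `E` contains a subset `Ê` of positive multi-indices such that the
first coordinates of `Ê` have divergent sum of reciprocals and, for every `j ≥ 1`,
every nonempty fiber of `Ê` obtained by fixing the first `j` coordinates is thick
in the `(j+1)`-st coordinate. -/
def CondI {n : ℕ} [NeZero n] (E : Set (Fin n → ℕ)) : Prop :=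
  ∃ Ehat : Set (Fin n → ℕ), Ehat ⊆ E ∧ (∀ x ∈ Ehat, ∀ i, 0 < x i) ∧
    ThickAt Ehat 0 ∧
    ∀ j : Fin n, 0 < j → ∀ a : Fin n → ℕ,
      (fiberSet Ehat j a).Nonempty → ThickAt (fiberSet Ehat j a) j

open Complex Set Metric Filter Topology

noncomputable def blaschkeFactor (a : ℝ) (z : ℂ) : ℂ := (z - a) / (z + a)

section Blaschke

variable {a : ℝ} {z : ℂ}

lemma add_ofReal_ne_zero (ha : 0 < a) (hz : 0 < z.re) : z + a ≠ 0 := by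
  intro h
  have := congrArg re h
  simp only [add_re, ofReal_re, zero_re] at this
  linarith

lemma norm_blaschkeFactor_lt_one (ha : 0 < a) (hz : 0 < z.re) : ‖blaschkeFactor a z‖ < 1 := by
  rw [blaschkeFactor, norm_div, div_lt_one (norm_pos_iff.2 (add_ofReal_ne_zero ha hz)),
    ← sq_lt_sq₀ (norm_nonneg _) (norm_nonneg _), Complex.sq_norm, Complex.sq_norm, normSq_apply,
    normSq_apply]
  simp only [sub_re, sub_im, add_re, add_im, ofReal_re, ofReal_im]
  nlinarith

lemma blaschkeFactor_ne_zero (ha : 0 < a) (hz : 0 < z.re) (hza : z ≠ a) :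
    blaschkeFactor a z ≠ 0 :=
  div_ne_zero (sub_ne_zero.2 hza) (add_ofReal_ne_zero ha hz)

lemma differentiableOn_blaschkeFactor (ha : 0 < a) :
    DifferentiableOn ℂ (blaschkeFactor a) {z | 0 < z.re} :=
  (differentiableOn_id.sub_const _).div (differentiableOn_id.add_const _)
    fun _ hz => add_ofReal_ne_zero ha hz

lemma cayley_blaschkeFactor (ha : 0 < a) (hz : 0 < z.re) :
    a * (1 + blaschkeFactor a z) / (1 - blaschkeFactor a z) = z := by
  have hza := add_ofReal_ne_zero ha hz
  have ha' : (a : ℂ) ≠ 0 := ofReal_ne_zero.2 ha.ne'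
  have h1 : 1 + blaschkeFactor a z = 2 * z / (z + a) := by
    rw [blaschkeFactor]; field_simp; ring
  have h2 : 1 - blaschkeFactor a z = 2 * a / (z + a) := by
    rw [blaschkeFactor]; field_simp; ring
  rw [h1, h2]
  field_simp

lemma re_cayley_pos (ha : 0 < a) {u : ℂ} (hu : ‖u‖ < 1) :
    0 < (a * (1 + u) / (1 - u)).re := by
  have hu1 : 0 < normSq (1 - u) := normSq_pos.2 fun h => by
    simp [← sub_eq_zero.1 h] at hu
  have hu2 : u.re * u.re + u.im * u.im < 1 := by
    rw [← normSq_apply, ← Complex.sq_norm]; nlinarith [norm_nonneg u]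
  rw [div_re, ← add_div]
  apply div_pos _ hu1
  simp only [mul_re, mul_im, ofReal_re, ofReal_im, add_re, add_im, sub_re, sub_im, one_re,
    one_im]
  nlinarith

lemma exists_eq_blaschkeFactor_mul {f : ℂ → ℂ} {C : ℝ} (ha : 0 < a)
    (hd : DifferentiableOn ℂ f {z | 0 < z.re}) (hb : ∀ z, 0 < z.re → ‖f z‖ ≤ C)
    (hfa : f a = 0) :
    ∃ g : ℂ → ℂ, DifferentiableOn ℂ g {z | 0 < z.re} ∧ (∀ z, 0 < z.re → ‖g z‖ ≤ C) ∧
      ∀ z, 0 < z.re → f z = blaschkeFactor a z * g z := by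
  set ψ : ℂ → ℂ := fun u => a * (1 + u) / (1 - u)
  have hψ : MapsTo ψ (ball 0 1) {z | 0 < z.re} := fun u hu =>
    re_cayley_pos ha (mem_ball_zero_iff.1 hu)
  set F := f ∘ ψ
  have hFd : DifferentiableOn ℂ F (ball 0 1) := by
    refine hd.comp (fun u hu => DifferentiableAt.differentiableWithinAt ?_) hψ
    have : 1 - u ≠ 0 := sub_ne_zero.2 fun h => by simp [← h] at hu
    fun_prop (disch := exact this)
  have hF0 : F 0 = 0 := by simp [F, ψ, hfa]
  have hFmaps : MapsTo F (ball 0 1) (closedBall (F 0) C) := fun u hu => by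
    rw [hF0, mem_closedBall_zero_iff]
    exact hb _ (hψ hu)
  have hB : MapsTo (blaschkeFactor a) {z | 0 < z.re} (ball 0 1) := fun z hz =>
    mem_ball_zero_iff.2 (norm_blaschkeFactor_lt_one ha hz)
  refine ⟨dslope F 0 ∘ blaschkeFactor a, ?_, fun z hz => ?_, fun z hz => ?_⟩
  · exact ((differentiableOn_dslope (ball_mem_nhds 0 one_pos)).2 hFd).comp
      (differentiableOn_blaschkeFactor ha) hB
  · simpa using norm_dslope_le_div_of_mapsTo_ball hFd hFmaps (hB hz)
  · have := sub_smul_dslope F 0 (blaschkeFactor a z)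
    rw [sub_zero, hF0, sub_zero, smul_eq_mul] at this
    rw [Function.comp_apply, this]
    simp [F, ψ, cayley_blaschkeFactor ha hz]

lemma norm_blaschkeFactor_le_exp (ha : 1 ≤ a) (hz : 0 < z.re) :
    ‖blaschkeFactor a z‖ ≤ Real.exp (-(2 * z.re / (1 + ‖z‖) ^ 2 / a)) := by
  set t := 2 * z.re / (1 + ‖z‖) ^ 2 / a
  have hB : 0 < ‖z + a‖ := norm_pos_iff.2 (add_ofReal_ne_zero (by linarith) hz)
  have hsq : ‖z + a‖ ^ 2 = ‖z - a‖ ^ 2 + 4 * a * z.re := by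
    simp only [Complex.sq_norm, normSq_apply, add_re, add_im, sub_re, sub_im, ofReal_re,
      ofReal_im]
    ring
  have hle : ‖z + a‖ ≤ a * (1 + ‖z‖) := by
    refine (norm_add_le _ _).trans ?_
    rw [norm_real, Real.norm_of_nonneg (by linarith)]
    nlinarith [norm_nonneg z]
  have ht : 2 * t * (a * (1 + ‖z‖)) ^ 2 = 4 * a * z.re := by
    simp only [t]; field_simp; ring
  have hsq_le : ‖blaschkeFactor a z‖ ^ 2 ≤ 1 - 2 * t := by
    rw [blaschkeFactor, norm_div, div_pow, div_le_iff₀ (by positivity)]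
    have : 0 ≤ t := by positivity
    nlinarith [mul_le_mul_of_nonneg_left (pow_le_pow_left₀ hB.le hle 2)
      (by positivity : 0 ≤ 2 * t)]
  have hexp : 1 - 2 * t ≤ Real.exp (-t) ^ 2 := by
    rw [← Real.exp_nat_mul, Nat.cast_ofNat, mul_neg]
    linarith [Real.add_one_le_exp (-(2 * t))]
  exact (pow_le_pow_iff_left₀ (norm_nonneg _) (Real.exp_pos _).le two_ne_zero).1
    (hsq_le.trans hexp)

lemma norm_le_mul_prod_norm_blaschkeFactor {ι : Type*} {f : ℂ → ℂ} {C : ℝ}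
    (hd : DifferentiableOn ℂ f {z | 0 < z.re}) (hb : ∀ z, 0 < z.re → ‖f z‖ ≤ C)
    (s : Finset ι) (a : ι → ℝ) (ha : ∀ i ∈ s, 0 < a i) (hinj : InjOn a s)
    (hzero : ∀ i ∈ s, f (a i) = 0) (hz : 0 < z.re) :
    ‖f z‖ ≤ C * ∏ i ∈ s, ‖blaschkeFactor (a i) z‖ := by
  classical
  induction s using Finset.induction_on generalizing f with
  | empty => simpa using hb z hz
  | @insert i s hi ih =>
    rw [Finset.forall_mem_insert] at ha hzero
    rw [Finset.coe_insert, injOn_insert hi] at hinj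
    obtain ⟨g, hgd, hgb, hfg⟩ := exists_eq_blaschkeFactor_mul ha.1 hd hb hzero.1
    have hgs : ∀ j ∈ s, g (a j) = 0 := fun j hj => by
      have hj0 : 0 < (a j : ℂ).re := by simpa using ha.2 j hj
      have hji : (a j : ℂ) ≠ a i := ofReal_injective.ne fun h => hinj.2 ⟨j, hj, h⟩
      simpa [hzero.2 j hj, blaschkeFactor_ne_zero ha.1 hj0 hji] using (hfg _ hj0).symm
    rw [hfg z hz, norm_mul, Finset.prod_insert hi, mul_left_comm]
    exact mul_le_mul_of_nonneg_left (ih hgd hgb ha.2 hinj.1 hgs) (norm_nonneg _)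

end Blaschke

lemma exists_finset_le_sum_inv {S : Set ℕ} (hS : ∀ k ∈ S, 0 < k)
    (h : ∑' k : S, (1 : ℝ≥0∞) / (k : ℕ) = ⊤) (M : ℝ) :
    ∃ t : Finset S, M ≤ ∑ k ∈ t, 1 / ((k : ℕ) : ℝ) := by
  by_contra! hlt
  have hsum : Summable fun k : S => 1 / ((k : ℕ) : ℝ) :=
    summable_of_sum_le (fun _ => by positivity) fun t => (hlt t).le
  have hreal : ∑' k : S, (1 : ℝ≥0∞) / (k : ℕ) =
      ENNReal.ofReal (∑' k : S, 1 / ((k : ℕ) : ℝ)) := by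
    rw [ENNReal.ofReal_tsum_of_nonneg (fun _ => by positivity) hsum]
    refine tsum_congr fun k => ?_
    rw [ENNReal.ofReal_div_of_pos (by exact_mod_cast hS k k.2), ENNReal.ofReal_one,
      ENNReal.ofReal_natCast]
  exact ENNReal.ofReal_ne_top (hreal ▸ h)

theorem eq_zero_of_tsum_inv_eq_top {f : ℂ → ℂ} {C : ℝ}
    (hd : DifferentiableOn ℂ f {z | 0 < z.re}) (hb : ∀ z, 0 < z.re → ‖f z‖ ≤ C)
    {S : Set ℕ} (hS : ∀ k ∈ S, 0 < k) (hthick : ∑' k : S, (1 : ℝ≥0∞) / (k : ℕ) = ⊤)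
    (hzero : ∀ k ∈ S, f k = 0) {z : ℂ} (hz : 0 < z.re) : f z = 0 := by
  set c := 2 * z.re / (1 + ‖z‖) ^ 2
  have hc : 0 < c := by positivity
  have hC : 0 ≤ C := (norm_nonneg _).trans (hb z hz)
  have hbound : ∀ M, ‖f z‖ ≤ C * Real.exp (-(c * M)) := by
    intro M
    obtain ⟨t, ht⟩ := exists_finset_le_sum_inv hS hthick M
    have hpos : ∀ k ∈ t, (0 : ℝ) < (k : ℕ) := fun k _ => by exact_mod_cast hS k k.2
    calc ‖f z‖ ≤ C * ∏ k ∈ t, ‖blaschkeFactor (k : ℕ) z‖ :=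
          norm_le_mul_prod_norm_blaschkeFactor hd hb t _ hpos
            (Nat.cast_injective.comp Subtype.val_injective).injOn
            (fun k _ => by exact_mod_cast hzero k k.2) hz
      _ ≤ C * ∏ k ∈ t, Real.exp (-(c / (k : ℕ))) := by
          gcongr with k
          exact norm_blaschkeFactor_le_exp (by exact_mod_cast hS k k.2) hz
      _ = C * Real.exp (-(c * ∑ k ∈ t, 1 / ((k : ℕ) : ℝ))) := by
          rw [← Real.exp_sum, Finset.mul_sum, ← Finset.sum_neg_distrib]
          simp only [mul_one_div]
      _ ≤ C * Real.exp (-(c * M)) := by gcongr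
  have hlim : Tendsto (fun M => C * Real.exp (-(c * M))) atTop (𝓝 0) := by
    simpa using (Real.tendsto_exp_neg_atTop_nhds_zero.comp
      (tendsto_id.const_mul_atTop hc)).const_mul C
  exact norm_le_zero_iff.1 (ge_of_tendsto' hlim hbound)

section PolyHalfPlane

variable {n : ℕ}

lemma fiberSet_zero [NeZero n] (E : Set (Fin n → ℕ)) (a : Fin n → ℕ) :
    fiberSet E 0 a = E := by
  ext x
  simp [fiberSet]

lemma ThickAt.nonempty {F : Set (Fin n → ℕ)} {j : Fin n} (h : ThickAt F j) : F.Nonempty := by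
  by_contra! hF
  simp [ThickAt, hF] at h

lemma thickAt_fiberSet_of_mem [NeZero n] {E : Set (Fin n → ℕ)} (h0 : ThickAt E 0)
    (hfib : ∀ j : Fin n, 0 < j → ∀ a, (fiberSet E j a).Nonempty → ThickAt (fiberSet E j a) j)
    {x : Fin n → ℕ} (hx : x ∈ E) (j : Fin n) : ThickAt (fiberSet E j x) j := by
  rcases eq_or_ne j 0 with rfl | hj
  · rwa [fiberSet_zero]
  · exact hfib j ((Fin.pos_iff_ne_zero' j).2 hj) x ⟨x, hx, fun _ _ => rfl⟩

lemma update_mem_polyHalfPlane {z : Fin n → ℂ} (hz : z ∈ {z : Fin n → ℂ | ∀ i, 0 < (z i).re})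
    (j : Fin n) {w : ℂ} (hw : 0 < w.re) :
    Function.update z j w ∈ {z : Fin n → ℂ | ∀ i, 0 < (z i).re} := fun i => by
  rcases eq_or_ne i j with rfl | hij
  · simpa
  · simpa [hij] using hz i

theorem eq_zero_of_thickAt_fiberSet {f : (Fin n → ℂ) → ℂ} {C : ℝ}
    (hd : DifferentiableOn ℂ f {z : Fin n → ℂ | ∀ i, 0 < (z i).re})
    (hb : ∀ z ∈ {z : Fin n → ℂ | ∀ i, 0 < (z i).re}, ‖f z‖ ≤ C)
    {E : Set (Fin n → ℕ)} {j : Fin n} {x : Fin n → ℕ} (hthick : ThickAt (fiberSet E j x) j)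
    (hfib : ∀ y ∈ fiberSet E j x, ∀ z ∈ {z : Fin n → ℂ | ∀ i, 0 < (z i).re},
      (∀ i ≤ j, z i = y i) → f z = 0)
    {z : Fin n → ℂ} (hz : z ∈ {z : Fin n → ℂ | ∀ i, 0 < (z i).re}) (hzx : ∀ i < j, z i = x i) :
    f z = 0 := by
  have hgd : DifferentiableOn ℂ (fun w => f (Function.update z j w)) {w | 0 < w.re} :=
    hd.comp (fun w _ => (hasFDerivAt_update z w).differentiableAt.differentiableWithinAt)
      fun w hw => update_mem_polyHalfPlane hz j hw
  have hzero : ∀ k ∈ {k : ℕ | 0 < k ∧ ∃ y ∈ fiberSet E j x, y j = k},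
      f (Function.update z j (k : ℂ)) = 0 := by
    rintro _ ⟨hk, y, hy, rfl⟩
    refine hfib y hy _ (update_mem_polyHalfPlane hz j (by simpa using hk)) fun i hij => ?_
    rcases hij.lt_or_eq with hij | rfl
    · rw [Function.update_of_ne hij.ne, hzx i hij, hy.2 i hij]
    · rw [Function.update_self]
  simpa using eq_zero_of_tsum_inv_eq_top hgd
    (fun w hw => hb _ (update_mem_polyHalfPlane hz j hw)) (fun k hk => hk.1) hthick hzero (hz j)

theorem eqOn_zero_of_forall_thickAt_fiberSet {f : (Fin n → ℂ) → ℂ} {C : ℝ}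
    (hd : DifferentiableOn ℂ f {z : Fin n → ℂ | ∀ i, 0 < (z i).re})
    (hb : ∀ z ∈ {z : Fin n → ℂ | ∀ i, 0 < (z i).re}, ‖f z‖ ≤ C)
    {E : Set (Fin n → ℕ)} (hE : ∀ x ∈ E, f (fun i => (x i : ℂ)) = 0) (hne : E.Nonempty)
    (hthick : ∀ x ∈ E, ∀ j, ThickAt (fiberSet E j x) j) :
    ∀ z ∈ {z : Fin n → ℂ | ∀ i, 0 < (z i).re}, f z = 0 := by
  obtain ⟨x₀, hx₀⟩ := hne
  suffices ∀ m ≤ n, ∀ x ∈ E, ∀ z ∈ {z : Fin n → ℂ | ∀ i, 0 < (z i).re},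
      (∀ i : Fin n, (i : ℕ) < m → z i = x i) → f z = 0 from
    fun z hz => this 0 n.zero_le x₀ hx₀ z hz fun i hi => absurd hi (Nat.not_lt_zero _)
  intro m hm
  induction hm using Nat.decreasingInduction with
  | self =>
    intro x hx z _ hzx
    rw [show z = fun i => (x i : ℂ) from funext fun i => hzx i i.2]
    exact hE x hx
  | of_succ m hm ih =>
    intro x hx z hz hzx
    exact eq_zero_of_thickAt_fiberSet hd hb (hthick x hx ⟨m, hm⟩)
      (fun y hy z hz hzy => ih y hy.1 z hz fun i hi => hzy i (Nat.lt_succ_iff.1 hi)) hz hzx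

end PolyHalfPlane

/-- A bounded holomorphic function on the product of right half-planes whose zero set
on positive integer multi-indices satisfies condition (I) vanishes identically. -/
theorem stmt_6 {n : ℕ} [NeZero n] (f : (Fin n → ℂ) → ℂ)
    (hdiff : DifferentiableOn ℂ f {z : Fin n → ℂ | ∀ i, 0 < (z i).re})
    (hbdd : ∃ C : ℝ, ∀ z ∈ {z : Fin n → ℂ | ∀ i, 0 < (z i).re}, ‖f z‖ ≤ C)
    (hE : CondI {α : Fin n → ℕ | (∀ i, 0 < α i) ∧ f (fun i => (α i : ℂ)) = 0}) :
    ∀ z ∈ {z : Fin n → ℂ | ∀ i, 0 < (z i).re}, f z = 0 := by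
  obtain ⟨C, hC⟩ := hbdd
  obtain ⟨Ehat, hsub, -, h0, hfib⟩ := hE
  exact eqOn_zero_of_forall_thickAt_fiberSet hdiff hC (fun x hx => (hsub hx).2) h0.nonempty
    fun x hx j => thickAt_fiberSet_of_mem h0 hfib hx j
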